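/- arXiv:1603.09535 — 3 statements merged into one kernel-verified Lean document; each statement's English description precedes it below -/
import Mathlib

section
/- Let p ≥ 0 be an integer and 0 < ε₁ < 1/2. For any three points a, b, c in a metric space, dist(a,b)^p ≤ (1+ε₁)^p · (dist(a,c)^p + dist(c,b)^p / ε₁^p). -/
/-! Split according to which of `dist a c` and `dist c b / ε₁` is larger: the triangle inequality
gives `dist a b ≤ (1 + ε₁) * max (dist a c) (dist c b / ε₁)`, and the `p`-th power of a maximum of
nonnegative numbers is at most the sum of the `p`-th powers. -/

theorem add_le_one_add_mul_max {K : Type*} [Field K] [LinearOrder K] [IsStrictOrderedRing K]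
    {ε : K} (hε : 0 < ε) (x y : K) : x + y ≤ (1 + ε) * max x (y / ε) := by
  have hy : y ≤ ε * max x (y / ε) := by
    calc y = ε * (y / ε) := (mul_div_cancel₀ y hε.ne').symm
      _ ≤ ε * max x (y / ε) := mul_le_mul_of_nonneg_left (le_max_right _ _) hε.le
  linarith [le_max_left x (y / ε)]

theorem max_pow_le_pow_add_pow {R : Type*} [Semiring R] [LinearOrder R] [IsOrderedRing R]
    {u v : R} (hu : 0 ≤ u) (hv : 0 ≤ v) (p : ℕ) : max u v ^ p ≤ u ^ p + v ^ p := by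
  rcases max_choice u v with h | h <;> rw [h]
  · exact le_add_of_nonneg_right (pow_nonneg hv p)
  · exact le_add_of_nonneg_left (pow_nonneg hu p)

theorem stmt_0_general {X : Type*} [MetricSpace X] (p : ℕ) (ε₁ : ℝ)
    (hε₁ : 0 < ε₁) (a b c : X) :
    dist a b ^ p ≤ (1 + ε₁) ^ p * (dist a c ^ p + dist c b ^ p / ε₁ ^ p) := by
  have hab : dist a b ≤ (1 + ε₁) * max (dist a c) (dist c b / ε₁) :=
    (dist_triangle a c b).trans (add_le_one_add_mul_max hε₁ _ _)
  calc dist a b ^ p ≤ ((1 + ε₁) * max (dist a c) (dist c b / ε₁)) ^ p :=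
        pow_le_pow_left₀ dist_nonneg hab p
    _ = (1 + ε₁) ^ p * max (dist a c) (dist c b / ε₁) ^ p := mul_pow _ _ _
    _ ≤ (1 + ε₁) ^ p * (dist a c ^ p + dist c b ^ p / ε₁ ^ p) := by
        rw [← div_pow]
        gcongr
        exact max_pow_le_pow_add_pow dist_nonneg (div_nonneg dist_nonneg hε₁.le) p

theorem stmt_0 {X : Type*} [MetricSpace X] (p : ℕ) (ε₁ : ℝ)
    (hε₁ : 0 < ε₁) (hε₁' : ε₁ < 1/2) (a b c : X) :
    dist a b ^ p ≤ (1 + ε₁) ^ p * (dist a c ^ p + dist c b ^ p / ε₁ ^ p) :=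
  stmt_0_general p ε₁ hε₁ a b c
end

section
/- Let G be an edge-weighted undirected connected graph, S a subset of vertices, and fix a priority ordering on V(G). For each v ∈ S, let V_S(v) be the Voronoi cell of v: the set of vertices closer (in shortest-path distance) to v than to any other vertex of S, breaking ties in favor of higher priority. Then for every v ∈ S, the induced subgraph G[V_S(v)] is connected. -/
/-- The weighted length of a walk: the sum of the weights of its edges. -/
noncomputable def walkWeight {V : Type*} {G : SimpleGraph V} (w : V → V → ℝ)
    {u v : V} (p : G.Walk u v) : ℝ :=
  (p.darts.map fun d => w d.toProd.1 d.toProd.2).sum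

/-- The shortest-path distance in an edge-weighted graph. -/
noncomputable def wdist {V : Type*} (G : SimpleGraph V) (w : V → V → ℝ) (u v : V) : ℝ :=
  sInf {r : ℝ | ∃ p : G.Walk u v, r = walkWeight w p}

/-- The Voronoi cell of a center `v ∈ S`: vertices strictly closer to `v` than to any
other center, ties broken in favor of higher priority (smaller `pr`). -/
def voronoiCell {V : Type*} (G : SimpleGraph V) (w : V → V → ℝ) (pr : V → ℕ)
    (S : Set V) (v : V) : Set V :=
  {u : V | ∀ x ∈ S, x ≠ v →
    wdist G w u v < wdist G w u x ∨ (wdist G w u v = wdist G w u x ∧ pr v < pr x)}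

/-!
A shortest walk from a vertex `u` of the cell of `v` to `v` stays inside the cell: if `y` lies
on it, then `d(y,v) - d(y,x) ≤ d(u,v) - d(u,x)` for every `x`, because `d(u,v)` splits exactly
at `y` while `d(u,x)` is at most the detour through `y`. So every vertex of the cell is joined
to `v` inside the cell. Shortest walks exist since, for nonnegative weights, shortcutting a
walk to a path does not increase its weight and there are finitely many paths.
-/

open SimpleGraph

section WeightedDistance

variable {V : Type*} {G : SimpleGraph V} {w : V → V → ℝ}

@[simp]
lemma walkWeight_nil {u : V} : walkWeight w (Walk.nil : G.Walk u u) = 0 := by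
  simp [walkWeight]

@[simp]
lemma walkWeight_cons {u x v : V} (h : G.Adj u x) (p : G.Walk x v) :
    walkWeight w (Walk.cons h p) = w u x + walkWeight w p := by
  simp [walkWeight]

lemma walkWeight_append {u x v : V} (p : G.Walk u x) (q : G.Walk x v) :
    walkWeight w (p.append q) = walkWeight w p + walkWeight w q := by
  simp [walkWeight, Walk.darts_append]

lemma walkWeight_nonneg (hw : ∀ a b, G.Adj a b → 0 ≤ w a b) {u v : V} (p : G.Walk u v) :
    0 ≤ walkWeight w p :=
  List.sum_nonneg <| by
    simp only [List.mem_map]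
    rintro _ ⟨d, -, rfl⟩
    exact hw _ _ d.adj

lemma walkWeight_bypass_le [DecidableEq V] (hw : ∀ a b, G.Adj a b → 0 ≤ w a b)
    {u v : V} (p : G.Walk u v) : walkWeight w p.bypass ≤ walkWeight w p :=
  (p.darts_bypass_sublist_darts.map _).sum_le_sum <| by
    simp only [List.mem_map]
    rintro _ ⟨d, -, rfl⟩
    exact hw _ _ d.adj

lemma wdist_le_walkWeight (hw : ∀ a b, G.Adj a b → 0 ≤ w a b) {u v : V} (p : G.Walk u v) :
    wdist G w u v ≤ walkWeight w p :=
  csInf_le ⟨0, by rintro r ⟨q, rfl⟩; exact walkWeight_nonneg hw q⟩ ⟨p, rfl⟩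

lemma wdist_self (hw : ∀ a b, G.Adj a b → 0 ≤ w a b) (u : V) : wdist G w u u = 0 :=
  le_antisymm (by simpa using wdist_le_walkWeight hw (Walk.nil : G.Walk u u)) <|
    le_csInf ⟨_, Walk.nil, rfl⟩ (by rintro r ⟨p, rfl⟩; exact walkWeight_nonneg hw p)

lemma exists_walkWeight_eq_wdist [Finite V] (hG : G.Preconnected)
    (hw : ∀ a b, G.Adj a b → 0 ≤ w a b) (u v : V) :
    ∃ p : G.Walk u v, walkWeight w p = wdist G w u v := by
  classical
  have := Fintype.ofFinite V
  obtain ⟨p₀⟩ := hG u v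
  have : Nonempty (G.Path u v) := ⟨⟨p₀.bypass, p₀.bypass_isPath⟩⟩
  obtain ⟨q, hq⟩ := Finite.exists_min fun q : G.Path u v => walkWeight w q.1
  refine ⟨q.1, le_antisymm (le_csInf ⟨_, p₀, rfl⟩ ?_) (wdist_le_walkWeight hw q.1)⟩
  rintro _ ⟨p, rfl⟩
  calc walkWeight w q.1 ≤ walkWeight w p.bypass := hq ⟨p.bypass, p.bypass_isPath⟩
    _ ≤ walkWeight w p := walkWeight_bypass_le hw p

lemma wdist_pos [Finite V] (hG : G.Preconnected) (hw : ∀ a b, G.Adj a b → 0 < w a b)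
    {u v : V} (huv : u ≠ v) : 0 < wdist G w u v := by
  obtain ⟨p, hp⟩ := exists_walkWeight_eq_wdist hG (fun a b h => (hw a b h).le) u v
  rw [← hp]
  cases p with
  | nil => exact absurd rfl huv
  | cons h q =>
    rw [walkWeight_cons]
    exact add_pos_of_pos_of_nonneg (hw _ _ h) (walkWeight_nonneg (fun a b h => (hw a b h).le) q)

lemma wdist_le_walkWeight_add_wdist [Finite V] (hG : G.Preconnected)
    (hw : ∀ a b, G.Adj a b → 0 ≤ w a b) {u y : V} (q : G.Walk u y) (x : V) :
    wdist G w u x ≤ walkWeight w q + wdist G w y x := by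
  obtain ⟨r, hr⟩ := exists_walkWeight_eq_wdist hG hw y x
  rw [← hr, ← walkWeight_append]
  exact wdist_le_walkWeight hw _

lemma wdist_sub_wdist_le_of_mem_support [Finite V] (hG : G.Preconnected)
    (hw : ∀ a b, G.Adj a b → 0 ≤ w a b) {u v y : V} (p : G.Walk u v)
    (hp : walkWeight w p = wdist G w u v) (hy : y ∈ p.support) (x : V) :
    wdist G w y v - wdist G w y x ≤ wdist G w u v - wdist G w u x := by
  classical
  have hsplit : walkWeight w (p.takeUntil y hy) + walkWeight w (p.dropUntil y hy) =
      wdist G w u v := by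
    rw [← walkWeight_append, p.take_spec hy, hp]
  have hyv := wdist_le_walkWeight hw (p.dropUntil y hy)
  have hux := wdist_le_walkWeight_add_wdist hG hw (p.takeUntil y hy) x
  linarith

end WeightedDistance

section VoronoiCell

variable {V : Type*} [Finite V] {G : SimpleGraph V} {w : V → V → ℝ}

lemma mem_voronoiCell_self (hG : G.Preconnected) (hw : ∀ a b, G.Adj a b → 0 < w a b)
    (pr : V → ℕ) (S : Set V) (v : V) : v ∈ voronoiCell G w pr S v := by
  intro x _ hxv
  left
  rw [wdist_self (fun a b h => (hw a b h).le)]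
  exact wdist_pos hG hw hxv.symm

lemma support_subset_voronoiCell (hG : G.Preconnected) (hw : ∀ a b, G.Adj a b → 0 ≤ w a b)
    {pr : V → ℕ} {S : Set V} {u v : V} (hu : u ∈ voronoiCell G w pr S v) (p : G.Walk u v)
    (hp : walkWeight w p = wdist G w u v) : ∀ y ∈ p.support, y ∈ voronoiCell G w pr S v := by
  intro y hy x hx hxv
  have hcmp := wdist_sub_wdist_le_of_mem_support hG hw p hp hy x
  rcases hu x hx hxv with hlt | ⟨heq, hpr⟩
  · exact Or.inl (by linarith)
  · exact (lt_or_eq_of_le (by linarith : wdist G w y v ≤ wdist G w y x)).imp_right (⟨·, hpr⟩)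

theorem voronoiCell_induce_connected (hG : G.Preconnected) (hw : ∀ a b, G.Adj a b → 0 < w a b)
    (pr : V → ℕ) (S : Set V) (v : V) : (G.induce (voronoiCell G w pr S v)).Connected := by
  have hw₀ : ∀ a b, G.Adj a b → 0 ≤ w a b := fun a b h => (hw a b h).le
  rw [connected_iff_exists_forall_reachable]
  refine ⟨⟨v, mem_voronoiCell_self hG hw pr S v⟩, ?_⟩
  rintro ⟨u, hu⟩
  obtain ⟨p, hp⟩ := exists_walkWeight_eq_wdist hG hw₀ u v
  exact (p.induce _ (support_subset_voronoiCell hG hw₀ hu p hp)).reachable.symm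

end VoronoiCell

theorem stmt_4_general {V : Type*} [Fintype V] (G : SimpleGraph V) (hG : G.Connected)
    (w : V → V → ℝ)
    (hwpos : ∀ u v, G.Adj u v → 0 < w u v)
    (pr : V → ℕ)
    (S : Set V) (v : V) :
    (G.induce (voronoiCell G w pr S v)).Connected :=
  voronoiCell_induce_connected hG.preconnected hwpos pr S v

theorem stmt_4 {V : Type*} [Fintype V] (G : SimpleGraph V) (hG : G.Connected)
    (w : V → V → ℝ) (hwsym : ∀ u v, w u v = w v u)
    (hwpos : ∀ u v, G.Adj u v → 0 < w u v)
    (pr : V → ℕ) (hpr : Function.Injective pr)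
    (S : Set V) (v : V) (hv : v ∈ S) :
    (G.induce (voronoiCell G w pr S v)).Connected :=
  stmt_4_general G hG w hwpos pr S v
end

section
/- Let A and B be finite sets with |A| ≥ |B|, both subsets partitioned by a common partition S₁, …, S_p of a ground set, where each part satisfies 1/(2ε²) ≤ |S_i| ≤ 1/ε² for a constant 0 < ε < 1. Then there exists a coarsening of the partition (grouping parts together) such that each group C is a union of O(1/ε⁵) parts S_i and satisfies |C ∩ A| ≥ |C ∩ B|. -/
/-!
With `d i = #(S i ∩ A) - #(S i ∩ B)` we have `|d i| ≤ M := ⌊1 / ε ^ 2⌋₊` and `0 ≤ ∑ i, d i`,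
and a group `Q` is admissible iff `0 ≤ ∑ i ∈ Q, d i`. It suffices to split off, again and again, a
nonempty group of at most `2 * M + 1` indices such that both it and the rest have nonnegative
sum. To find one, walk through the indices keeping the partial sum in `[-M, M]`: step up while
it is below `0`, down while it is above the total `T`. If a nonempty partial sum lands in
`[0, T]`, its indices form the group; otherwise, after `2 * M + 1` steps two of the `2 * M + 2`
partial sums coincide and the indices in between have sum zero. Finally
`2 * M + 1 ≤ 3 / ε ^ 2 ≤ 3 / ε ^ 5`.
-/

open Finset Function

section Walk

variable {ι : Type*} [DecidableEq ι] (d : ι → ℤ) (M : ℕ)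

theorem exists_walk_step {s V : Finset ι} (hs : s.Nonempty) (hd : ∀ i ∈ s, |d i| ≤ M)
    (hsum : 0 ≤ ∑ i ∈ s, d i) (hV : V ⊆ s) (hp : ∑ i ∈ V, d i ∈ Icc (-(M : ℤ)) M)
    (hstop : ¬(V.Nonempty ∧ 0 ≤ ∑ i ∈ V, d i ∧ ∑ i ∈ V, d i ≤ ∑ i ∈ s, d i)) :
    ∃ i ∈ s \ V, (∑ j ∈ V, d j) + d i ∈ Icc (-(M : ℤ)) M := by
  set p := ∑ i ∈ V, d i
  have hrest : ∑ i ∈ s \ V, d i = ∑ i ∈ s, d i - p := sum_sdiff_eq_sub hV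
  rw [mem_Icc] at hp
  rcases le_or_gt p 0 with hp0 | hp0
  · have hne : (s \ V).Nonempty := by
      rw [sdiff_nonempty]
      intro hsV
      rw [hsV.antisymm hV] at hstop hs hsum
      exact hstop ⟨hs, hsum, le_rfl⟩
    obtain ⟨i, hi, hdi⟩ := exists_le_of_sum_le (f := fun _ => 0) (g := d) hne
      (by rw [sum_const_zero, hrest]; linarith)
    refine ⟨i, hi, mem_Icc.2 ⟨by linarith, ?_⟩⟩
    linarith [(abs_le.1 (hd i (mem_sdiff.1 hi).1)).2]
  · have hpT : ∑ i ∈ s, d i < p := by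
      by_contra! h
      exact hstop ⟨nonempty_of_sum_ne_zero hp0.ne', hp0.le, h⟩
    obtain ⟨i, hi, hdi⟩ := exists_lt_of_sum_lt (f := d) (g := fun _ => 0) (s := s \ V)
      (by rw [sum_const_zero, hrest]; linarith)
    refine ⟨i, hi, mem_Icc.2 ⟨?_, by linarith⟩⟩
    linarith [(abs_le.1 (hd i (mem_sdiff.1 hi).1)).1]

-- The walk is stored newest-first, so its partial sums are the sums of the suffixes
-- `l.drop k`.
theorem exists_nonneg_split_or_walk {s : Finset ι} (hs : s.Nonempty)
    (hd : ∀ i ∈ s, |d i| ≤ M) (hsum : 0 ≤ ∑ i ∈ s, d i) (n : ℕ) :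
    (∃ Q ⊆ s, Q.Nonempty ∧ #Q ≤ n ∧ 0 ≤ ∑ i ∈ Q, d i ∧ 0 ≤ ∑ i ∈ s \ Q, d i) ∨
      ∃ l : List ι, l.Nodup ∧ (∀ i ∈ l, i ∈ s) ∧ l.length = n ∧
        ∀ k, ((l.drop k).map d).sum ∈ Icc (-(M : ℤ)) M := by
  induction n with
  | zero => exact .inr ⟨[], List.nodup_nil, by simp, rfl, by simp⟩
  | succ n ih =>
    obtain ⟨Q, hQs, hQ, hQn, hQsum, hrest⟩ | ⟨l, hnd, hls, hlen, hwalk⟩ := ih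
    · exact .inl ⟨Q, hQs, hQ, by omega, hQsum, hrest⟩
    have hV : l.toFinset ⊆ s := fun i hi => hls i (List.mem_toFinset.1 hi)
    have hlsum : ∑ i ∈ l.toFinset, d i = (l.map d).sum := List.sum_toFinset d hnd
    by_cases hstop : l.toFinset.Nonempty ∧ 0 ≤ ∑ i ∈ l.toFinset, d i ∧
        ∑ i ∈ l.toFinset, d i ≤ ∑ i ∈ s, d i
    · refine .inl ⟨l.toFinset, hV, hstop.1, ?_, hstop.2.1, ?_⟩
      · rw [List.toFinset_card_of_nodup hnd]; omega
      · rw [sum_sdiff_eq_sub hV]; linarith [hstop.2.2]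
    obtain ⟨i, hi, hpi⟩ := exists_walk_step d M hs hd hsum hV
      (by simpa [hlsum] using hwalk 0) hstop
    rw [mem_sdiff, List.mem_toFinset] at hi
    refine .inr ⟨i :: l, List.nodup_cons.2 ⟨hi.2, hnd⟩, ?_, by simp [hlen], ?_⟩
    · simpa using ⟨hi.1, hls⟩
    · rintro (_ | k)
      · simpa [hlsum, add_comm] using hpi
      · exact hwalk k

theorem exists_zero_sum_of_walk {l : List ι} (hnd : l.Nodup) (hlen : l.length = 2 * M + 1)
    (hwalk : ∀ k, ((l.drop k).map d).sum ∈ Icc (-(M : ℤ)) M) :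
    ∃ Q ⊆ l.toFinset, Q.Nonempty ∧ #Q ≤ 2 * M + 1 ∧ ∑ i ∈ Q, d i = 0 := by
  have hcard : #(Icc (-(M : ℤ)) M) < #(range (2 * M + 2)) := by
    rw [Int.card_Icc, card_range]; omega
  obtain ⟨a, ha, b, hb, hab, heq⟩ :=
    exists_ne_map_eq_of_card_lt_of_maps_to hcard fun k _ => hwalk k
  wlog hlt : a < b generalizing a b
  · exact this b hb a ha hab.symm heq.symm (by omega)
  rw [mem_range] at hb
  set t := (l.drop a).take (b - a)
  have htsum : (t.map d).sum = 0 := by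
    have := List.sum_take_add_sum_drop ((l.drop a).map d) (b - a)
    rwa [← List.map_take, ← List.map_drop, List.drop_drop, Nat.add_sub_cancel' hlt.le, heq,
      add_eq_right] at this
  have htnd : t.Nodup := hnd.sublist ((List.take_sublist _ _).trans (List.drop_sublist _ _))
  have htlen : t.length = b - a := by simp [t, hlen]; omega
  refine ⟨t.toFinset, fun i hi => ?_, ?_, ?_, ?_⟩
  · exact List.mem_toFinset.2 <|
      List.mem_of_mem_drop <| List.mem_of_mem_take <| List.mem_toFinset.1 hi
  · rw [← card_pos, List.toFinset_card_of_nodup htnd]; omega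
  · rw [List.toFinset_card_of_nodup htnd]; omega
  · rw [List.sum_toFinset d htnd, htsum]

theorem exists_small_nonneg_split {s : Finset ι} (hs : s.Nonempty) (hd : ∀ i ∈ s, |d i| ≤ M)
    (hsum : 0 ≤ ∑ i ∈ s, d i) :
    ∃ Q ⊆ s, Q.Nonempty ∧ #Q ≤ 2 * M + 1 ∧ 0 ≤ ∑ i ∈ Q, d i ∧ 0 ≤ ∑ i ∈ s \ Q, d i := by
  obtain hsplit | ⟨l, hnd, hls, hlen, hwalk⟩ :=
    exists_nonneg_split_or_walk d M hs hd hsum (2 * M + 1)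
  · exact hsplit
  obtain ⟨Q, hQl, hQ, hQcard, hQsum⟩ := exists_zero_sum_of_walk d M hnd hlen hwalk
  have hQs : Q ⊆ s := fun i hi => hls i (List.mem_toFinset.1 (hQl hi))
  exact ⟨Q, hQs, hQ, hQcard, hQsum.ge, by rwa [sum_sdiff_eq_sub hQs, hQsum, sub_zero]⟩

theorem exists_finpartition_small_nonneg (s : Finset ι) (hd : ∀ i ∈ s, |d i| ≤ M)
    (hsum : 0 ≤ ∑ i ∈ s, d i) :
    ∃ P : Finpartition s, ∀ Q ∈ P.parts, #Q ≤ 2 * M + 1 ∧ 0 ≤ ∑ i ∈ Q, d i := by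
  induction s using Finset.strongInduction with
  | _ s ih =>
    obtain rfl | hs := s.eq_empty_or_nonempty
    · exact ⟨Finpartition.empty _, by simp⟩
    obtain ⟨Q, hQs, hQ, hQcard, hQsum, hrest⟩ := exists_small_nonneg_split d M hs hd hsum
    obtain ⟨P, hP⟩ := ih (s \ Q) (sdiff_ssubset hQs hQ)
      (fun i hi => hd i (mem_sdiff.1 hi).1) hrest
    refine ⟨P.extend hQ.ne_empty sdiff_disjoint (sdiff_union_of_subset hQs), ?_⟩
    simp only [Finpartition.extend_parts, mem_insert, forall_eq_or_imp]
    exact ⟨⟨hQcard, hQsum⟩, hP⟩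

end Walk

theorem Finset.card_biUnion_inter_of_pairwise_disjoint {ι α : Type*} [DecidableEq α]
    {S : ι → Finset α} (hS : Pairwise (Disjoint on S)) (Q : Finset ι) (A : Finset α) :
    #(Q.biUnion S ∩ A) = ∑ i ∈ Q, #(S i ∩ A) := by
  rw [biUnion_inter, card_biUnion]
  exact fun i _ j _ hij => (hS hij).mono inter_subset_left inter_subset_left

theorem two_mul_floor_one_div_sq_add_one_le {ε : ℝ} (hε0 : 0 < ε) (hε1 : ε < 1) :
    2 * (⌊1 / ε ^ 2⌋₊ : ℝ) + 1 ≤ 3 / ε ^ 5 := by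
  have hone : 1 ≤ 1 / ε ^ 2 := by
    rw [le_div_iff₀ (by positivity), one_mul]; exact pow_le_one₀ hε0.le hε1.le
  calc 2 * (⌊1 / ε ^ 2⌋₊ : ℝ) + 1 ≤ 3 * (1 / ε ^ 2) := by
        linarith [Nat.floor_le (zero_le_one.trans hone)]
    _ ≤ 3 / ε ^ 5 := by
        rw [mul_one_div]
        exact div_le_div_of_nonneg_left (by norm_num) (by positivity)
          (pow_le_pow_of_le_one hε0.le hε1.le (by norm_num))

theorem stmt_9 :
    ∃ K : ℝ, 0 < K ∧
      ∀ (Ω : Type) [inst : DecidableEq Ω] [instF : Fintype Ω] (q : ℕ)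
        (S : Fin q → Finset Ω) (A B : Finset Ω) (ε : ℝ),
        0 < ε → ε < 1 →
        (∀ i j : Fin q, i ≠ j → Disjoint (S i) (S j)) →
        (Finset.univ.biUnion S = Finset.univ) →
        (∀ i : Fin q, 1 / (2 * ε ^ 2) ≤ ((S i).card : ℝ) ∧ ((S i).card : ℝ) ≤ 1 / ε ^ 2) →
        Disjoint A B → A ∪ B = Finset.univ → B.card ≤ A.card →
        ∃ P : Finset (Finset (Fin q)),
          (∀ i : Fin q, ∃! Q, Q ∈ P ∧ i ∈ Q) ∧
          ∀ Q ∈ P, ((Q.card : ℝ) ≤ K / ε ^ 5 ∧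
            ((Q.biUnion S) ∩ B).card ≤ ((Q.biUnion S) ∩ A).card) := by
  refine ⟨3, by norm_num, fun Ω _ _ q S A B ε hε0 hε1 hS hcover hsize _ _ hBA => ?_⟩
  set M := ⌊1 / ε ^ 2⌋₊
  set d : Fin q → ℤ := fun i => #(S i ∩ A) - #(S i ∩ B)
  have hd_sum (Q : Finset (Fin q)) :
      ∑ i ∈ Q, d i = #(Q.biUnion S ∩ A) - #(Q.biUnion S ∩ B) := by
    simp only [d, sum_sub_distrib, Nat.cast_sum,
      card_biUnion_inter_of_pairwise_disjoint hS]
  have hd (i) (_ : i ∈ univ) : |d i| ≤ M := by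
    have hSM : #(S i) ≤ M := Nat.le_floor (hsize i).2
    exact abs_sub_le_of_nonneg_of_le (by positivity)
      (by exact_mod_cast (card_le_card inter_subset_left).trans hSM) (by positivity)
      (by exact_mod_cast (card_le_card inter_subset_left).trans hSM)
  have htotal : 0 ≤ ∑ i, d i := by
    rw [hd_sum, hcover, univ_inter, univ_inter, sub_nonneg]; exact_mod_cast hBA
  obtain ⟨P, hP⟩ := exists_finpartition_small_nonneg d M univ hd htotal
  refine ⟨P.parts, fun i => P.existsUnique_mem (mem_univ i), fun Q hQ => ⟨?_, ?_⟩⟩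
  · calc (#Q : ℝ) ≤ 2 * M + 1 := by exact_mod_cast (hP Q hQ).1
      _ ≤ 3 / ε ^ 5 := two_mul_floor_one_div_sq_add_one_le hε0 hε1
  · have := (hP Q hQ).2
    rw [hd_sum, sub_nonneg] at this
    exact_mod_cast this
end
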